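/- Let X be a metric space equipped with a closed partial order and let μ, ν be tight Borel probability measures on X. Then the following are equivalent: (1) ν ≤ μ in the stochastic order; (2) for every antitone Borel-measurable function f : X → [0,∞], ∫ f dμ ≤ ∫ f dν (Lebesgue integrals, possibly infinite); (3) for every antitone bounded lower semicontinuous function f : X → [0,∞), ∫ f dμ ≤ ∫ f dν. -/

import Mathlib

/-!
Tightness makes both measures inner regular, and since the order is closed, the up- and
down-closures of a compact set are closed. So an inequality between the measures of closed lower
sets (the complements of open upper sets) passes to all Borel lower sets, and through the
layer-cake formula to antitone functions, whose superlevel sets are lower sets. Conversely,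
indicators of Borel lower sets are antitone, those of open lower sets are moreover lower
semicontinuous, and approximating a Borel upper set from inside by the up-closure of a compact
subset brings the stochastic order back.
-/

open MeasureTheory
open scoped ENNReal

universe u

/-- A Borel measure on a metric space is tight (inner regular) if every Borel set can be
approximated in measure from inside by compact subsets. -/
def MeasureIsTight {X : Type*} [TopologicalSpace X] [MeasurableSpace X]
    (μ : Measure X) : Prop :=
  ∀ A : Set X, MeasurableSet A → ∀ ε : ℝ≥0∞, 0 < ε → ∃ K ⊆ A, IsCompact K ∧ μ A < μ K + ε

theorem MeasureIsTight.innerRegular {X : Type*} [TopologicalSpace X] [MeasurableSpace X]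
    {μ : Measure X} (hμ : MeasureIsTight μ) : μ.InnerRegular := by
  refine ⟨fun A hA r hr => ?_⟩
  obtain ⟨K, hKA, hK, hlt⟩ := hμ A hA (μ A - r) (tsub_pos_of_lt hr)
  refine ⟨K, hKA, hK, lt_of_not_ge fun hKr => hlt.not_ge ?_⟩
  calc μ K + (μ A - r) ≤ r + (μ A - r) := by gcongr
    _ = μ A := add_tsub_cancel_of_le hr.le

theorem prob_compl_le_prob_compl_iff {X : Type*} [MeasurableSpace X] {μ ν : Measure X}
    [IsProbabilityMeasure μ] [IsProbabilityMeasure ν] {s : Set X} (hs : MeasurableSet s) :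
    μ sᶜ ≤ ν sᶜ ↔ ν s ≤ μ s := by
  rw [prob_compl_eq_one_sub hs, prob_compl_eq_one_sub hs,
    ENNReal.sub_le_sub_iff_left prob_le_one ENNReal.one_ne_top]

theorem IsLowerSet.antitone_indicator {X M : Type*} [Preorder X] [Preorder M] [Zero M]
    {s : Set X} {f : X → M} (hs : IsLowerSet s) (hf : Antitone f) (hf₀ : 0 ≤ f) :
    Antitone (s.indicator f) := by
  intro a b hab
  by_cases hb : b ∈ s
  · rw [Set.indicator_of_mem hb, Set.indicator_of_mem (hs hab hb)]
    exact hf hab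
  · rw [Set.indicator_of_notMem hb]
    exact Set.indicator_nonneg (fun x _ => hf₀ x) a

section OrderClosed

variable {X : Type u} [TopologicalSpace X] [Preorder X] [OrderClosedTopology X]

theorem IsCompact.isClosed_upperClosure {K : Set X} (hK : IsCompact K) :
    IsClosed (upperClosure K : Set X) := by
  have : CompactSpace K := isCompact_iff_compactSpace.mp hK
  have hgraph : IsClosed {p : K × X | (p.1 : X) ≤ p.2} :=
    isClosed_le (continuous_subtype_val.comp continuous_fst) continuous_snd
  convert isClosedMap_snd_of_compactSpace _ hgraph using 1
  ext x
  simp [mem_upperClosure]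

theorem IsCompact.isClosed_lowerClosure {K : Set X} (hK : IsCompact K) :
    IsClosed (lowerClosure K : Set X) :=
  IsCompact.isClosed_upperClosure (X := Xᵒᵈ) hK

variable [MeasurableSpace X] {μ ν : Measure X} [μ.InnerRegular]

theorem measure_le_of_forall_isClosed_isLowerSet
    (h : ∀ L : Set X, IsClosed L → IsLowerSet L → μ L ≤ ν L) {A : Set X}
    (hA : MeasurableSet A) (hA_lower : IsLowerSet A) : μ A ≤ ν A := by
  rw [hA.measure_eq_iSup_isCompact μ]
  refine iSup₂_le fun K hKA => iSup_le fun hK => ?_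
  calc μ K ≤ μ (lowerClosure K) := measure_mono subset_lowerClosure
    _ ≤ ν (lowerClosure K) := h _ hK.isClosed_lowerClosure (lowerClosure K).lower
    _ ≤ ν A := measure_mono (lowerClosure_min hKA hA_lower)

theorem measure_le_of_forall_isClosed_isUpperSet
    (h : ∀ T : Set X, IsClosed T → IsUpperSet T → μ T ≤ ν T) {A : Set X}
    (hA : MeasurableSet A) (hA_upper : IsUpperSet A) : μ A ≤ ν A := by
  rw [hA.measure_eq_iSup_isCompact μ]
  refine iSup₂_le fun K hKA => iSup_le fun hK => ?_
  calc μ K ≤ μ (upperClosure K) := measure_mono subset_upperClosure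
    _ ≤ ν (upperClosure K) := h _ hK.isClosed_upperClosure (upperClosure K).upper
    _ ≤ ν A := measure_mono (upperClosure_min hKA hA_upper)

end OrderClosed

section LowerSets

variable {X : Type u} [Preorder X] [MeasurableSpace X] {μ ν : Measure X}

theorem lintegral_ofReal_le_lintegral_ofReal_of_antitone
    (h : ∀ A : Set X, MeasurableSet A → IsLowerSet A → μ A ≤ ν A) {g : X → ℝ}
    (hg : Measurable g) (hg₀ : 0 ≤ g) (hg_anti : Antitone g) :
    ∫⁻ x, ENNReal.ofReal (g x) ∂μ ≤ ∫⁻ x, ENNReal.ofReal (g x) ∂ν := by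
  rw [lintegral_eq_lintegral_meas_lt μ (ae_of_all _ hg₀) hg.aemeasurable,
    lintegral_eq_lintegral_meas_lt ν (ae_of_all _ hg₀) hg.aemeasurable]
  exact lintegral_mono fun t => h _ (measurableSet_lt measurable_const hg)
    fun a b hba ha => ha.trans_le (hg_anti hba)

theorem lintegral_le_lintegral_of_antitone
    (h : ∀ A : Set X, MeasurableSet A → IsLowerSet A → μ A ≤ ν A) {f : X → ℝ≥0∞}
    (hf : Measurable f) (hf_anti : Antitone f) :
    ∫⁻ x, f x ∂μ ≤ ∫⁻ x, f x ∂ν := by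
  -- Truncating at `n` makes the real layer-cake formula available; then let `n → ∞`.
  have htrunc : ∀ n : ℕ, ∫⁻ x, min (f x) n ∂μ ≤ ∫⁻ x, min (f x) n ∂ν := by
    intro n
    have hfin : ∀ x, min (f x) n ≠ ∞ := fun x =>
      ((min_le_right _ _).trans_lt (ENNReal.natCast_lt_top n)).ne
    simpa only [ENNReal.ofReal_toReal (hfin _)] using
      lintegral_ofReal_le_lintegral_ofReal_of_antitone h
        (hf.min measurable_const).ennreal_toReal (fun x => ENNReal.toReal_nonneg)
        fun a b hab => ENNReal.toReal_mono (hfin a) (min_le_min_right _ (hf_anti hab))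
  have hsup : ∀ x, ⨆ n : ℕ, min (f x) n = f x := fun x => by
    rw [← inf_iSup_eq, ENNReal.iSup_natCast, inf_top_eq]
  have hmeas : ∀ n : ℕ, Measurable fun x => min (f x) n := fun n => hf.min measurable_const
  have hmono : Monotone fun (n : ℕ) x => min (f x) n := fun m n hmn x =>
    min_le_min_left _ (Nat.cast_le.mpr hmn)
  have hlim : ∀ ρ : Measure X, ∫⁻ x, f x ∂ρ = ⨆ n : ℕ, ∫⁻ x, min (f x) n ∂ρ := fun ρ => by
    rw [← lintegral_iSup hmeas hmono]
    simp only [hsup]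
  rw [hlim μ, hlim ν]
  exact iSup_mono htrunc

theorem integral_le_integral_of_antitone [IsFiniteMeasure μ] [IsFiniteMeasure ν]
    (h : ∀ A : Set X, MeasurableSet A → IsLowerSet A → μ A ≤ ν A) {f : X → ℝ}
    (hf : Measurable f) (hf_anti : Antitone f) (hf₀ : 0 ≤ f) (hf_bdd : ∃ M, ∀ x, f x ≤ M) :
    ∫ x, f x ∂μ ≤ ∫ x, f x ∂ν := by
  obtain ⟨M, hM⟩ := hf_bdd
  have hint : ∀ (ρ : Measure X) [IsFiniteMeasure ρ], Integrable f ρ := fun ρ _ =>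
    .of_bound hf.aestronglyMeasurable M
      (ae_of_all _ fun x => by rw [Real.norm_of_nonneg (hf₀ x)]; exact hM x)
  rw [← ENNReal.ofReal_le_ofReal_iff (integral_nonneg hf₀),
    ofReal_integral_eq_lintegral_ofReal (hint μ) (ae_of_all _ hf₀),
    ofReal_integral_eq_lintegral_ofReal (hint ν) (ae_of_all _ hf₀)]
  exact lintegral_ofReal_le_lintegral_ofReal_of_antitone h hf hf₀ hf_anti

theorem measure_le_of_forall_integral_le [TopologicalSpace X] [OpensMeasurableSpace X]
    [IsFiniteMeasure μ] [IsFiniteMeasure ν]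
    (h : ∀ f : X → ℝ, Antitone f → LowerSemicontinuous f → (∀ x, 0 ≤ f x) →
      (∃ M : ℝ, ∀ x, f x ≤ M) → ∫ x, f x ∂μ ≤ ∫ x, f x ∂ν)
    {V : Set X} (hV : IsOpen V) (hV_lower : IsLowerSet V) : μ V ≤ ν V := by
  have hind := h (V.indicator 1) (hV_lower.antitone_indicator antitone_const zero_le_one)
    (hV.lowerSemicontinuous_indicator zero_le_one)
    (Set.indicator_nonneg fun _ _ => zero_le_one)
    ⟨1, Set.indicator_le_self' fun _ _ => zero_le_one⟩
  rw [integral_indicator_one hV.measurableSet, integral_indicator_one hV.measurableSet] at hind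
  exact (ENNReal.toReal_le_toReal (measure_ne_top μ V) (measure_ne_top ν V)).mp hind

/-- For tight Borel probability measures `μ, ν` on a metric space with a closed partial order,
the following are equivalent: (1) `ν ≤ μ` in the stochastic order; (2) `∫⁻ f dμ ≤ ∫⁻ f dν`
for every antitone Borel function `f : X → ℝ≥0∞`; (3) `∫ f dμ ≤ ∫ f dν` for every antitone
bounded lower semicontinuous function `f : X → [0,∞)`. -/
theorem stochasticOrder_antitone_iff_lintegral_iff_integral {X : Type*} [MetricSpace X]
    [MeasurableSpace X] [BorelSpace X] [PartialOrder X]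
    (hclosed : IsClosed {p : X × X | p.1 ≤ p.2})
    (μ ν : Measure X) [IsProbabilityMeasure μ] [IsProbabilityMeasure ν]
    (hμ : MeasureIsTight μ) (hν : MeasureIsTight ν) :
    ((∀ U : Set X, IsOpen U → IsUpperSet U → ν U ≤ μ U) ↔
        (∀ f : X → ℝ≥0∞, Measurable f → Antitone f →
          ∫⁻ x, f x ∂μ ≤ ∫⁻ x, f x ∂ν)) ∧
      ((∀ U : Set X, IsOpen U → IsUpperSet U → ν U ≤ μ U) ↔
        (∀ f : X → ℝ, Antitone f → LowerSemicontinuous f → (∀ x, 0 ≤ f x) →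
          (∃ M : ℝ, ∀ x, f x ≤ M) → ∫ x, f x ∂μ ≤ ∫ x, f x ∂ν)) := by
  have : OrderClosedTopology X := ⟨hclosed⟩
  have := hμ.innerRegular
  have := hν.innerRegular
  have lower_of_stoch : (∀ U : Set X, IsOpen U → IsUpperSet U → ν U ≤ μ U) →
      ∀ A : Set X, MeasurableSet A → IsLowerSet A → μ A ≤ ν A := fun h _ =>
    measure_le_of_forall_isClosed_isLowerSet fun L hL hL_lower =>
      (prob_compl_le_prob_compl_iff hL.measurableSet).mp (h _ hL.isOpen_compl hL_lower.compl)
  have stoch_of_lower : (∀ A : Set X, MeasurableSet A → IsLowerSet A → μ A ≤ ν A) →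
      ∀ U : Set X, IsOpen U → IsUpperSet U → ν U ≤ μ U := fun h U hU hU_upper =>
    (prob_compl_le_prob_compl_iff hU.measurableSet).mp
      (h _ hU.measurableSet.compl hU_upper.compl)
  refine ⟨⟨fun h f hf hf_anti =>
      lintegral_le_lintegral_of_antitone (lower_of_stoch h) hf hf_anti,
    fun h => stoch_of_lower fun A hA hA_lower => ?_⟩,
    ⟨fun h f hf_anti hf_lsc hf₀ =>
      integral_le_integral_of_antitone (lower_of_stoch h) hf_lsc.measurable hf_anti hf₀,
    fun h U hU hU_upper => ?_⟩⟩
  · simpa only [lintegral_indicator_one hA] using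
      h _ (measurable_one.indicator hA) (hA_lower.antitone_indicator antitone_const zero_le_one)
  · refine measure_le_of_forall_isClosed_isUpperSet (fun T hT hT_upper => ?_)
      hU.measurableSet hU_upper
    exact (prob_compl_le_prob_compl_iff hT.measurableSet).mp
      (measure_le_of_forall_integral_le h hT.isOpen_compl hT_upper.compl)
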